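/- At every point (0,w) of the Cartan–Hartogs domain M_Ω(μ), the squared norm of the Ricci tensor of g(μ) satisfies [|Ric_{g(μ)}|²]_{z=0} = d((μ(d+1)−γ)/μ)² (1 − |w|²)² − 2d(d+2)((μ(d+1)−γ)/μ)(1 − |w|²) + (d+1)(d+2)². -/

import Mathlib

open Complex Matrix
open scoped ComplexOrder

noncomputable section

/-- Wirtinger derivative `∂f/∂z_j` of a function `f : ℂ^n → ℂ`. -/
def wD {n : ℕ} (j : Fin n) (f : (Fin n → ℂ) → ℂ) : (Fin n → ℂ) → ℂ :=
  fun p => (1 / 2 : ℂ) *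
    (fderiv ℝ f p (Pi.single j 1) - Complex.I * fderiv ℝ f p (Pi.single j Complex.I))

/-- Conjugate Wirtinger derivative `∂f/∂z̄_j` of a function `f : ℂ^n → ℂ`. -/
def wDbar {n : ℕ} (j : Fin n) (f : (Fin n → ℂ) → ℂ) : (Fin n → ℂ) → ℂ :=
  fun p => (1 / 2 : ℂ) *
    (fderiv ℝ f p (Pi.single j 1) + Complex.I * fderiv ℝ f p (Pi.single j Complex.I))

variable (d : ℕ) (μ : ℝ) (N : (Fin d → ℂ) → ℝ)

/-- `N^μ` as a complex-valued function on `ℂ^d`. -/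
def NmuC : (Fin d → ℂ) → ℂ := fun z => ((N z ^ μ : ℝ) : ℂ)

/-- The Kähler potential `Φ(z,w) = -log(N(z)^μ - |w|²)` of the Cartan–Hartogs domain,
identifying `(z,w)` with the point `p : ℂ^{d+1}`, `z = p ∘ castSucc`, `w = p (last)`. -/
def CHpot : (Fin (d + 1) → ℂ) → ℂ :=
  fun p =>
    -(((Real.log (N (fun j => p j.castSucc) ^ μ - ‖p (Fin.last d)‖ ^ 2)) : ℂ))

/-- The component `g(μ)_{αβ̄} = ∂²Φ/∂z_α∂z̄_β` of the Cartan--Hartogs metric. -/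
def gCH (α β : Fin (d + 1)) : (Fin (d + 1) → ℂ) → ℂ := wD α (wDbar β (CHpot d μ N))

/-- The matrix of the Cartan--Hartogs metric `g(μ)` at a point `p`. -/
def gCHmat (p : Fin (d + 1) → ℂ) : Matrix (Fin (d + 1)) (Fin (d + 1)) ℂ :=
  Matrix.of fun α β => gCH d μ N α β p

/-- The component `g^{Ω(μ)}_{jk̄} = -∂² log N^μ/∂z_j∂z̄_k`. -/
def gOm (j k : Fin d) : (Fin d → ℂ) → ℂ :=
  fun z => -(wD j (wDbar k fun y => ((Real.log (N y ^ μ) : ℝ) : ℂ)) z)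

/-- The matrix of the metric `g^{Ω(μ)}` at a point `z ∈ Ω`. -/
def gOmMat (z : Fin d → ℂ) : Matrix (Fin d) (Fin d) ℂ :=
  Matrix.of fun j k => gOm d μ N j k z

/-- The Ricci tensor `Ric_{αβ̄} = -∂² log det(g(μ))/∂z_α∂z̄_β` of `g(μ)`. -/
def RicCH (α β : Fin (d + 1)) : (Fin (d + 1) → ℂ) → ℂ :=
  fun p => -(wD α (wDbar β fun q => Complex.log ((gCHmat d μ N q).det)) p)

/-- The scalar curvature `κ_{g(μ)} = Σ_{α,β} g(μ)^{βᾱ} Ric_{αβ̄}` of `g(μ)`. -/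
def scalCH : (Fin (d + 1) → ℂ) → ℂ :=
  fun p => ∑ α : Fin (d + 1), ∑ β : Fin (d + 1),
    (gCHmat d μ N p)⁻¹ β α * RicCH d μ N α β p

/-- The curvature tensor
`R_{αβ̄ητ̄} = -g(μ)_{αβ̄ητ̄} + Σ_{ζ,θ} g(μ)^{ζθ̄} g(μ)_{αζ̄η} g(μ)_{θτ̄β̄}` of `g(μ)`. -/
def Rcurv (α β η τ : Fin (d + 1)) : (Fin (d + 1) → ℂ) → ℂ :=
  fun p => -(wDbar τ (wD η (gCH d μ N α β)) p) +
    ∑ ζ : Fin (d + 1), ∑ θ : Fin (d + 1),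
      (gCHmat d μ N p)⁻¹ ζ θ * wD η (gCH d μ N α ζ) p * wDbar β (gCH d μ N θ τ) p

/-- The squared norm `|R|²` of the curvature tensor of `g(μ)`. -/
def Rnorm2 : (Fin (d + 1) → ℂ) → ℂ :=
  fun p => ∑ α : Fin (d+1), ∑ β : Fin (d+1), ∑ η : Fin (d+1), ∑ θ : Fin (d+1),
    ∑ ζ : Fin (d+1), ∑ ν : Fin (d+1), ∑ ξ : Fin (d+1), ∑ τ : Fin (d+1),
      (starRingEnd ℂ) ((gCHmat d μ N p)⁻¹ α ζ) * (gCHmat d μ N p)⁻¹ β ν *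
      (starRingEnd ℂ) ((gCHmat d μ N p)⁻¹ η ξ) * (gCHmat d μ N p)⁻¹ θ τ *
      Rcurv d μ N α β η θ p * (starRingEnd ℂ) (Rcurv d μ N ζ ν ξ τ p)

/-- The squared norm `|Ric|²` of the Ricci tensor of `g(μ)`. -/
def RicNorm2 : (Fin (d + 1) → ℂ) → ℂ :=
  fun p => ∑ α : Fin (d+1), ∑ β : Fin (d+1), ∑ η : Fin (d+1), ∑ τ : Fin (d+1),
    (starRingEnd ℂ) ((gCHmat d μ N p)⁻¹ η τ) * (gCHmat d μ N p)⁻¹ α β *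
    RicCH d μ N η α p * (starRingEnd ℂ) (RicCH d μ N τ β p)

/-- The Laplacian `Δκ_{g(μ)} = Σ_{α,β} g(μ)^{αβ̄} ∂²κ_{g(μ)}/∂z_α∂z̄_β`. -/
def lapScalCH : (Fin (d + 1) → ℂ) → ℂ :=
  fun p => ∑ α : Fin (d+1), ∑ β : Fin (d+1),
    (gCHmat d μ N p)⁻¹ α β * wDbar β (wD α (scalCH d μ N)) p

/-- The Ricci tensor of `g^{Ω(μ)}`. -/
def RicOm (j k : Fin d) : (Fin d → ℂ) → ℂ :=
  fun z => -(wD j (wDbar k fun y => Complex.log ((gOmMat d μ N y).det)) z)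

/-- The scalar curvature `κ_{g^{Ω(μ)}}` of `g^{Ω(μ)}`. -/
def scalOm : (Fin d → ℂ) → ℂ :=
  fun z => ∑ j : Fin d, ∑ k : Fin d, (gOmMat d μ N z)⁻¹ k j * RicOm d μ N j k z

/-- The curvature tensor of `g^{Ω(μ)}`. -/
def RcurvOm (i j k l : Fin d) : (Fin d → ℂ) → ℂ :=
  fun z => -(wDbar l (wD k (gOm d μ N i j)) z) +
    ∑ p : Fin d, ∑ q : Fin d,
      (gOmMat d μ N z)⁻¹ p q * wD k (gOm d μ N i p) z * wDbar j (gOm d μ N q l) z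

/-- The squared norm `|R_{g^{Ω(μ)}}|²` of the curvature tensor of `g^{Ω(μ)}`. -/
def Rnorm2Om : (Fin d → ℂ) → ℂ :=
  fun z => ∑ α : Fin d, ∑ β : Fin d, ∑ η : Fin d, ∑ θ : Fin d,
    ∑ ζ : Fin d, ∑ ν : Fin d, ∑ ξ : Fin d, ∑ τ : Fin d,
      (starRingEnd ℂ) ((gOmMat d μ N z)⁻¹ α ζ) * (gOmMat d μ N z)⁻¹ β ν *
      (starRingEnd ℂ) ((gOmMat d μ N z)⁻¹ η ξ) * (gOmMat d μ N z)⁻¹ θ τ *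
      RcurvOm d μ N α β η θ z * (starRingEnd ℂ) (RcurvOm d μ N ζ ν ξ τ z)

end

noncomputable section WTK
variable {n : ℕ} {f g : (Fin n → ℂ) → ℂ} {h : (Fin n → ℂ) → ℝ} {p : Fin n → ℂ} {j k : Fin n}

lemma wD_congr (j : Fin n) (hfg : f =ᶠ[nhds p] g) : wD j f p = wD j g p := by
  unfold wD; rw [hfg.fderiv_eq]

lemma wDbar_congr (j : Fin n) (hfg : f =ᶠ[nhds p] g) : wDbar j f p = wDbar j g p := by
  unfold wDbar; rw [hfg.fderiv_eq]

lemma wD_const (c : ℂ) : wD j (fun _ => c) p = 0 := by simp [wD]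

lemma wDbar_const (c : ℂ) : wDbar j (fun _ => c) p = 0 := by simp [wDbar]

lemma wD_add (hf : DifferentiableAt ℝ f p) (hg : DifferentiableAt ℝ g p) :
    wD j (fun q => f q + g q) p = wD j f p + wD j g p := by
  unfold wD; rw [fderiv_fun_add hf hg]; simp; ring

lemma wDbar_add (hf : DifferentiableAt ℝ f p) (hg : DifferentiableAt ℝ g p) :
    wDbar j (fun q => f q + g q) p = wDbar j f p + wDbar j g p := by
  unfold wDbar; rw [fderiv_fun_add hf hg]; simp; ring

lemma wD_neg : wD j (fun q => -(f q)) p = -(wD j f p) := by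
  unfold wD; rw [fderiv_fun_neg]; simp; ring

lemma wDbar_neg : wDbar j (fun q => -(f q)) p = -(wDbar j f p) := by
  unfold wDbar; rw [fderiv_fun_neg]; simp; ring

lemma wD_sub (hf : DifferentiableAt ℝ f p) (hg : DifferentiableAt ℝ g p) :
    wD j (fun q => f q - g q) p = wD j f p - wD j g p := by
  unfold wD; rw [fderiv_fun_sub hf hg]; simp; ring

lemma wDbar_sub (hf : DifferentiableAt ℝ f p) (hg : DifferentiableAt ℝ g p) :
    wDbar j (fun q => f q - g q) p = wDbar j f p - wDbar j g p := by
  unfold wDbar; rw [fderiv_fun_sub hf hg]; simp; ring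

lemma wD_const_mul (c : ℂ) (hf : DifferentiableAt ℝ f p) :
    wD j (fun q => c * f q) p = c * wD j f p := by
  unfold wD; rw [fderiv_const_mul hf]; simp; ring

lemma wDbar_const_mul (c : ℂ) (hf : DifferentiableAt ℝ f p) :
    wDbar j (fun q => c * f q) p = c * wDbar j f p := by
  unfold wDbar; rw [fderiv_const_mul hf]; simp; ring

lemma wD_mul (hf : DifferentiableAt ℝ f p) (hg : DifferentiableAt ℝ g p) :
    wD j (fun q => f q * g q) p = wD j f p * g p + f p * wD j g p := by
  unfold wD; rw [fderiv_fun_mul hf hg]; simp [smul_eq_mul]; ring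

lemma wDbar_mul (hf : DifferentiableAt ℝ f p) (hg : DifferentiableAt ℝ g p) :
    wDbar j (fun q => f q * g q) p = wDbar j f p * g p + f p * wDbar j g p := by
  unfold wDbar; rw [fderiv_fun_mul hf hg]; simp [smul_eq_mul]; ring

lemma fderiv_coord (k : Fin n) (p : Fin n → ℂ) :
    fderiv ℝ (fun q : Fin n → ℂ => q k) p
      = (ContinuousLinearMap.proj k : (Fin n → ℂ) →L[ℝ] ℂ) :=
  (ContinuousLinearMap.proj k : (Fin n → ℂ) →L[ℝ] ℂ).fderiv

lemma wD_coord (j k : Fin n) (p : Fin n → ℂ) :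
    wD j (fun q => q k) p = if k = j then 1 else 0 := by
  unfold wD; rw [fderiv_coord]
  simp only [ContinuousLinearMap.proj_apply, Pi.single_apply]
  by_cases hk : k = j <;> simp [hk] <;> norm_num

lemma wDbar_coord (j k : Fin n) (p : Fin n → ℂ) :
    wDbar j (fun q => q k) p = 0 := by
  unfold wDbar; rw [fderiv_coord]
  simp only [ContinuousLinearMap.proj_apply, Pi.single_apply]
  by_cases hk : k = j <;> simp [hk] <;> norm_num

lemma fderiv_conj_coord (k : Fin n) (p : Fin n → ℂ) :
    fderiv ℝ (fun q : Fin n → ℂ => (starRingEnd ℂ) (q k)) p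
      = ((Complex.conjCLE : ℂ ≃L[ℝ] ℂ) : ℂ →L[ℝ] ℂ).comp
          (ContinuousLinearMap.proj k : (Fin n → ℂ) →L[ℝ] ℂ) :=
  (((Complex.conjCLE : ℂ ≃L[ℝ] ℂ) : ℂ →L[ℝ] ℂ).comp
          (ContinuousLinearMap.proj k : (Fin n → ℂ) →L[ℝ] ℂ)).fderiv

lemma wD_conj_coord (j k : Fin n) (p : Fin n → ℂ) :
    wD j (fun q => (starRingEnd ℂ) (q k)) p = 0 := by
  unfold wD; rw [fderiv_conj_coord]
  simp only [ContinuousLinearMap.comp_apply, ContinuousLinearMap.proj_apply,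
    Pi.single_apply, ContinuousLinearEquiv.coe_coe, Complex.conjCLE_apply]
  by_cases hk : k = j <;> simp [hk] <;> norm_num

lemma wDbar_conj_coord (j k : Fin n) (p : Fin n → ℂ) :
    wDbar j (fun q => (starRingEnd ℂ) (q k)) p = if k = j then 1 else 0 := by
  unfold wDbar; rw [fderiv_conj_coord]
  simp only [ContinuousLinearMap.comp_apply, ContinuousLinearMap.proj_apply,
    Pi.single_apply, ContinuousLinearEquiv.coe_coe, Complex.conjCLE_apply]
  by_cases hk : k = j <;> simp [hk] <;> norm_num

lemma wD_real_chain {φ : ℝ → ℝ} {a : ℝ} (hh : DifferentiableAt ℝ h p)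
    (hφ : HasDerivAt φ a (h p)) :
    wD j (fun q => ((φ (h q) : ℝ) : ℂ)) p = (a : ℂ) * wD j (fun q => ((h q : ℝ) : ℂ)) p := by
  have h1 : HasFDerivAt (fun q => ((φ (h q) : ℝ) : ℂ))
      (Complex.ofRealCLM.comp (a • fderiv ℝ h p)) p :=
    Complex.ofRealCLM.hasFDerivAt.comp p (hφ.comp_hasFDerivAt p hh.hasFDerivAt)
  have h2 : HasFDerivAt (fun q => ((h q : ℝ) : ℂ)) (Complex.ofRealCLM.comp (fderiv ℝ h p)) p :=
    Complex.ofRealCLM.hasFDerivAt.comp p hh.hasFDerivAt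
  unfold wD; rw [h1.fderiv, h2.fderiv]
  simp [smul_eq_mul]
  ring

lemma wDbar_real_chain {φ : ℝ → ℝ} {a : ℝ} (hh : DifferentiableAt ℝ h p)
    (hφ : HasDerivAt φ a (h p)) :
    wDbar j (fun q => ((φ (h q) : ℝ) : ℂ)) p
      = (a : ℂ) * wDbar j (fun q => ((h q : ℝ) : ℂ)) p := by
  have h1 : HasFDerivAt (fun q => ((φ (h q) : ℝ) : ℂ))
      (Complex.ofRealCLM.comp (a • fderiv ℝ h p)) p :=
    Complex.ofRealCLM.hasFDerivAt.comp p (hφ.comp_hasFDerivAt p hh.hasFDerivAt)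
  have h2 : HasFDerivAt (fun q => ((h q : ℝ) : ℂ)) (Complex.ofRealCLM.comp (fderiv ℝ h p)) p :=
    Complex.ofRealCLM.hasFDerivAt.comp p hh.hasFDerivAt
  unfold wDbar; rw [h1.fderiv, h2.fderiv]
  simp [smul_eq_mul]
  ring

/-- precomposition with `Fin.castSucc` as a CLM -/
def cproj (n : ℕ) : ((Fin (n+1) → ℂ)) →L[ℝ] (Fin n → ℂ) :=
  ContinuousLinearMap.pi (fun j => ContinuousLinearMap.proj j.castSucc)

lemma cproj_apply (q : Fin (n+1) → ℂ) : cproj n q = fun i => q i.castSucc := rfl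

lemma cproj_single_castSucc (j : Fin n) (c : ℂ) :
    cproj n (Pi.single j.castSucc c) = Pi.single j c := by
  funext i
  simp [cproj, Pi.single_apply, Fin.castSucc_inj]

lemma cproj_single_last (c : ℂ) :
    cproj n (Pi.single (Fin.last n) c) = 0 := by
  funext i
  simp [cproj, Pi.single_apply, (Fin.castSucc_lt_last i).ne]

lemma wD_comp_castSucc (f : (Fin n → ℂ) → ℂ) {p : Fin (n+1) → ℂ}
    (hf : DifferentiableAt ℝ f (fun i => p i.castSucc)) (j : Fin n) :
    wD j.castSucc (fun q => f (fun i => q i.castSucc)) p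
      = wD j f (fun i => p i.castSucc) := by
  have h1 : HasFDerivAt (fun q : Fin (n+1) → ℂ => f (fun i => q i.castSucc))
      ((fderiv ℝ f (fun i => p i.castSucc)).comp (cproj n)) p :=
    hf.hasFDerivAt.comp p (cproj n).hasFDerivAt
  unfold wD; rw [h1.fderiv]
  simp [cproj_single_castSucc]

lemma wDbar_comp_castSucc (f : (Fin n → ℂ) → ℂ) {p : Fin (n+1) → ℂ}
    (hf : DifferentiableAt ℝ f (fun i => p i.castSucc)) (j : Fin n) :
    wDbar j.castSucc (fun q => f (fun i => q i.castSucc)) p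
      = wDbar j f (fun i => p i.castSucc) := by
  have h1 : HasFDerivAt (fun q : Fin (n+1) → ℂ => f (fun i => q i.castSucc))
      ((fderiv ℝ f (fun i => p i.castSucc)).comp (cproj n)) p :=
    hf.hasFDerivAt.comp p (cproj n).hasFDerivAt
  unfold wDbar; rw [h1.fderiv]
  simp [cproj_single_castSucc]

lemma wD_last_comp (f : (Fin n → ℂ) → ℂ) {p : Fin (n+1) → ℂ}
    (hf : DifferentiableAt ℝ f (fun i => p i.castSucc)) :
    wD (Fin.last n) (fun q => f (fun i => q i.castSucc)) p = 0 := by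
  have h1 : HasFDerivAt (fun q : Fin (n+1) → ℂ => f (fun i => q i.castSucc))
      ((fderiv ℝ f (fun i => p i.castSucc)).comp (cproj n)) p :=
    hf.hasFDerivAt.comp p (cproj n).hasFDerivAt
  unfold wD; rw [h1.fderiv]
  simp [cproj_single_last]

lemma wDbar_last_comp (f : (Fin n → ℂ) → ℂ) {p : Fin (n+1) → ℂ}
    (hf : DifferentiableAt ℝ f (fun i => p i.castSucc)) :
    wDbar (Fin.last n) (fun q => f (fun i => q i.castSucc)) p = 0 := by
  have h1 : HasFDerivAt (fun q : Fin (n+1) → ℂ => f (fun i => q i.castSucc))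
      ((fderiv ℝ f (fun i => p i.castSucc)).comp (cproj n)) p :=
    hf.hasFDerivAt.comp p (cproj n).hasFDerivAt
  unfold wDbar; rw [h1.fderiv]
  simp [cproj_single_last]

lemma contDiffAt_wD (j : Fin n) (hf : ContDiffAt ℝ (⊤ : ℕ∞) f p) : ContDiffAt ℝ (⊤ : ℕ∞) (wD j f) p := by
  have h1 : ContDiffAt ℝ (⊤ : ℕ∞) (fderiv ℝ f) p := hf.fderiv_right (by simp)
  exact contDiffAt_const.mul ((h1.clm_apply contDiffAt_const).sub
    (contDiffAt_const.mul (h1.clm_apply contDiffAt_const)))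

lemma contDiffAt_wDbar (j : Fin n) (hf : ContDiffAt ℝ (⊤ : ℕ∞) f p) : ContDiffAt ℝ (⊤ : ℕ∞) (wDbar j f) p := by
  have h1 : ContDiffAt ℝ (⊤ : ℕ∞) (fderiv ℝ f) p := hf.fderiv_right (by simp)
  exact contDiffAt_const.mul ((h1.clm_apply contDiffAt_const).add
    (contDiffAt_const.mul (h1.clm_apply contDiffAt_const)))

lemma diff_coord {n : ℕ} {p : Fin n → ℂ} (k : Fin n) :
    DifferentiableAt ℝ (fun q : Fin n → ℂ => q k) p :=
  (ContinuousLinearMap.proj k : (Fin n → ℂ) →L[ℝ] ℂ).differentiableAt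

lemma diff_conj_coord {n : ℕ} {p : Fin n → ℂ} (k : Fin n) :
    DifferentiableAt ℝ (fun q : Fin n → ℂ => (starRingEnd ℂ) (q k)) p :=
  (((Complex.conjCLE : ℂ ≃L[ℝ] ℂ) : ℂ →L[ℝ] ℂ).comp
    (ContinuousLinearMap.proj k : (Fin n → ℂ) →L[ℝ] ℂ)).differentiableAt


end WTK

noncomputable section CHsetup

variable {d : ℕ} {μ γ : ℝ} {N : (Fin d → ℂ) → ℝ} {Ω : Set (Fin d → ℂ)}

/-- real function `N^μ` -/
def Xr (d : ℕ) (μ : ℝ) (N : (Fin d → ℂ) → ℝ) : (Fin d → ℂ) → ℝ := fun z => N z ^ μ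

/-- real function `N(z)^μ - |w|²` -/
def Fr (d : ℕ) (μ : ℝ) (N : (Fin d → ℂ) → ℝ) : (Fin (d+1) → ℂ) → ℝ :=
  fun q => N (fun i => q i.castSucc) ^ μ - ‖q (Fin.last d)‖ ^ 2

def Aw (d : ℕ) (μ : ℝ) (N : (Fin d → ℂ) → ℝ) (j : Fin d) : (Fin d → ℂ) → ℂ :=
  wD j (NmuC d μ N)

def Bw (d : ℕ) (μ : ℝ) (N : (Fin d → ℂ) → ℝ) (k : Fin d) : (Fin d → ℂ) → ℂ :=
  wDbar k (NmuC d μ N)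

def Cw (d : ℕ) (μ : ℝ) (N : (Fin d → ℂ) → ℝ) (j k : Fin d) : (Fin d → ℂ) → ℂ :=
  wD j (wDbar k (NmuC d μ N))

def Dom (d : ℕ) (μ : ℝ) (N : (Fin d → ℂ) → ℝ) (Ω : Set (Fin d → ℂ)) :
    Set (Fin (d+1) → ℂ) :=
  {q | (fun i => q i.castSucc) ∈ Ω ∧ 0 < Fr d μ N q}

lemma contDiff_abs_last :
    ContDiff ℝ (⊤ : ℕ∞) (fun q : Fin (d+1) → ℂ => ‖q (Fin.last d)‖ ^ 2) := by
  have h : (fun q : Fin (d+1) → ℂ => ‖q (Fin.last d)‖ ^ 2)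
      = fun q => (q (Fin.last d)).re ^ 2 + (q (Fin.last d)).im ^ 2 := by
    funext q; rw [Complex.sq_norm, Complex.normSq_apply]; ring
  rw [h]
  have hre : ContDiff ℝ (⊤ : ℕ∞) (fun q : Fin (d+1) → ℂ => (q (Fin.last d)).re) :=
    Complex.reCLM.contDiff.comp
      ((ContinuousLinearMap.proj (Fin.last d) : (Fin (d+1) → ℂ) →L[ℝ] ℂ)).contDiff
  have him : ContDiff ℝ (⊤ : ℕ∞) (fun q : Fin (d+1) → ℂ => (q (Fin.last d)).im) :=
    Complex.imCLM.contDiff.comp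
      ((ContinuousLinearMap.proj (Fin.last d) : (Fin (d+1) → ℂ) →L[ℝ] ℂ)).contDiff
  exact (hre.pow 2).add (him.pow 2)


section lemmas
variable (hΩopen : IsOpen Ω) (hNsm : ContDiffOn ℝ (⊤ : ℕ∞) N Ω) (hNpos : ∀ z ∈ Ω, 0 < N z)
include hΩopen hNsm hNpos


lemma contDiffAt_Xr {z : Fin d → ℂ} (hz : z ∈ Ω) : ContDiffAt ℝ (⊤ : ℕ∞) (Xr d μ N) z :=
  (hNsm.contDiffAt (hΩopen.mem_nhds hz)).rpow_const_of_ne (hNpos z hz).ne'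

lemma contDiffAt_NmuC {z : Fin d → ℂ} (hz : z ∈ Ω) : ContDiffAt ℝ (⊤ : ℕ∞) (NmuC d μ N) z :=
  Complex.ofRealCLM.contDiff.contDiffAt.comp z (contDiffAt_Xr hΩopen hNsm hNpos hz)

lemma Xr_pos {z : Fin d → ℂ} (hz : z ∈ Ω) : 0 < Xr d μ N z :=
  Real.rpow_pos_of_pos (hNpos z hz) μ

lemma contDiffAt_Bw {z : Fin d → ℂ} (hz : z ∈ Ω) (k : Fin d) :
    ContDiffAt ℝ (⊤ : ℕ∞) (Bw d μ N k) z :=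
  contDiffAt_wDbar k (contDiffAt_NmuC hΩopen hNsm hNpos hz)

lemma contDiffAt_Aw {z : Fin d → ℂ} (hz : z ∈ Ω) (j : Fin d) :
    ContDiffAt ℝ (⊤ : ℕ∞) (Aw d μ N j) z :=
  contDiffAt_wD j (contDiffAt_NmuC hΩopen hNsm hNpos hz)

lemma contDiffAt_Fr {p : Fin (d+1) → ℂ} (hp : (fun i => p i.castSucc) ∈ Ω) :
    ContDiffAt ℝ (⊤ : ℕ∞) (Fr d μ N) p := by
  have h1 : ContDiffAt ℝ (⊤ : ℕ∞) (fun q : Fin (d+1) → ℂ => N (fun i => q i.castSucc) ^ μ) p :=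
    (contDiffAt_Xr hΩopen hNsm hNpos hp).comp p (cproj d).contDiff.contDiffAt
  exact h1.sub contDiff_abs_last.contDiffAt

lemma isOpen_Dom : IsOpen (Dom d μ N Ω) := by
  have hU : IsOpen ((fun q : Fin (d+1) → ℂ => (fun i => q i.castSucc)) ⁻¹' Ω) :=
    hΩopen.preimage (cproj d).continuous
  have hcont : ContinuousOn (Fr d μ N)
      ((fun q : Fin (d+1) → ℂ => (fun i => q i.castSucc)) ⁻¹' Ω) := by
    intro q hq
    exact (contDiffAt_Fr hΩopen hNsm hNpos hq).continuousAt.continuousWithinAt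
  have : Dom d μ N Ω
      = ((fun q : Fin (d+1) → ℂ => (fun i => q i.castSucc)) ⁻¹' Ω) ∩ Fr d μ N ⁻¹' (Set.Ioi 0) := by
    ext q; simp [Dom, Set.mem_setOf_eq, Set.mem_preimage]
  rw [this]
  exact hcont.isOpen_inter_preimage hU isOpen_Ioi

end lemmas
end CHsetup

noncomputable section CHderiv
variable {d : ℕ} {μ γ : ℝ} {N : (Fin d → ℂ) → ℝ} {Ω : Set (Fin d → ℂ)}

lemma Fr_split : (fun q : Fin (d+1) → ℂ => ((Fr d μ N q : ℝ) : ℂ))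
    = fun q => NmuC d μ N (fun i => q i.castSucc)
        - q (Fin.last d) * (starRingEnd ℂ) (q (Fin.last d)) := by
  funext q
  simp only [Fr, NmuC, Complex.ofReal_sub]
  rw [Complex.sq_norm, Complex.mul_conj]


section derivs
variable (hΩopen : IsOpen Ω) (hNsm : ContDiffOn ℝ (⊤ : ℕ∞) N Ω) (hNpos : ∀ z ∈ Ω, 0 < N z)
  {p : Fin (d+1) → ℂ}
include hΩopen hNsm hNpos

lemma diff_NmuC_comp (hp : (fun i => p i.castSucc) ∈ Ω) :
    DifferentiableAt ℝ (fun q : Fin (d+1) → ℂ => NmuC d μ N (fun i => q i.castSucc)) p :=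
  ((contDiffAt_NmuC hΩopen hNsm hNpos hp).differentiableAt (by simp)).comp (g := NmuC d μ N) p
    (cproj d).differentiableAt

lemma diff_Fr (hp : (fun i => p i.castSucc) ∈ Ω) : DifferentiableAt ℝ (Fr d μ N) p :=
  (contDiffAt_Fr hΩopen hNsm hNpos hp).differentiableAt (by simp)

lemma wDbar_ofReal_Fr_cs (hp : (fun i => p i.castSucc) ∈ Ω) (k : Fin d) :
    wDbar k.castSucc (fun q => ((Fr d μ N q : ℝ) : ℂ)) p
      = Bw d μ N k (fun i => p i.castSucc) := by
  rw [Fr_split, wDbar_sub (diff_NmuC_comp hΩopen hNsm hNpos hp)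
      ((diff_coord _).fun_mul (diff_conj_coord _)),
    wDbar_comp_castSucc _ ((contDiffAt_NmuC hΩopen hNsm hNpos hp).differentiableAt (by simp)),
    wDbar_mul (diff_coord _) (diff_conj_coord _), wDbar_coord, wDbar_conj_coord]
  simp [(Fin.castSucc_lt_last k).ne', Bw]

lemma wDbar_ofReal_Fr_last (hp : (fun i => p i.castSucc) ∈ Ω) :
    wDbar (Fin.last d) (fun q => ((Fr d μ N q : ℝ) : ℂ)) p = -(p (Fin.last d)) := by
  rw [Fr_split, wDbar_sub (diff_NmuC_comp hΩopen hNsm hNpos hp)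
      ((diff_coord _).fun_mul (diff_conj_coord _)),
    wDbar_last_comp _ ((contDiffAt_NmuC hΩopen hNsm hNpos hp).differentiableAt (by simp)),
    wDbar_mul (diff_coord _) (diff_conj_coord _), wDbar_coord, wDbar_conj_coord]
  simp

lemma wD_ofReal_Fr_cs (hp : (fun i => p i.castSucc) ∈ Ω) (j : Fin d) :
    wD j.castSucc (fun q => ((Fr d μ N q : ℝ) : ℂ)) p
      = Aw d μ N j (fun i => p i.castSucc) := by
  rw [Fr_split, wD_sub (diff_NmuC_comp hΩopen hNsm hNpos hp)
      ((diff_coord _).fun_mul (diff_conj_coord _)),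
    wD_comp_castSucc _ ((contDiffAt_NmuC hΩopen hNsm hNpos hp).differentiableAt (by simp)),
    wD_mul (diff_coord _) (diff_conj_coord _), wD_coord, wD_conj_coord]
  simp [(Fin.castSucc_lt_last j).ne', Aw]

lemma wD_ofReal_Fr_last (hp : (fun i => p i.castSucc) ∈ Ω) :
    wD (Fin.last d) (fun q => ((Fr d μ N q : ℝ) : ℂ)) p
      = -((starRingEnd ℂ) (p (Fin.last d))) := by
  rw [Fr_split, wD_sub (diff_NmuC_comp hΩopen hNsm hNpos hp)
      ((diff_coord _).fun_mul (diff_conj_coord _)),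
    wD_last_comp _ ((contDiffAt_NmuC hΩopen hNsm hNpos hp).differentiableAt (by simp)),
    wD_mul (diff_coord _) (diff_conj_coord _), wD_coord, wD_conj_coord]
  simp

end derivs
end CHderiv

noncomputable section CHsecond
variable {d : ℕ} {μ γ : ℝ} {N : (Fin d → ℂ) → ℝ} {Ω : Set (Fin d → ℂ)}

/-- explicit formula for `∂̄_w Φ` -/
def e1 (d : ℕ) (μ : ℝ) (N : (Fin d → ℂ) → ℝ) : (Fin (d+1) → ℂ) → ℂ :=
  fun q => q (Fin.last d) * (((Fr d μ N q)⁻¹ : ℝ) : ℂ)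

/-- explicit formula for `∂̄_{z_k} Φ` -/
def e2 (d : ℕ) (μ : ℝ) (N : (Fin d → ℂ) → ℝ) (k : Fin d) : (Fin (d+1) → ℂ) → ℂ :=
  fun q => -(Bw d μ N k (fun i => q i.castSucc) * (((Fr d μ N q)⁻¹ : ℝ) : ℂ))

section derivs2
variable (hΩopen : IsOpen Ω) (hNsm : ContDiffOn ℝ (⊤ : ℕ∞) N Ω) (hNpos : ∀ z ∈ Ω, 0 < N z)
  {p : Fin (d+1) → ℂ} {z : Fin d → ℂ}
include hΩopen hNsm hNpos

lemma wD_inv_Fr_cs (hp : p ∈ Dom d μ N Ω) (j : Fin d) :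
    wD j.castSucc (fun q => (((Fr d μ N q)⁻¹ : ℝ) : ℂ)) p
      = -(((((Fr d μ N p)^2)⁻¹ : ℝ) : ℂ) * Aw d μ N j (fun i => p i.castSucc)) := by
  have h := wD_real_chain (h := Fr d μ N) (j := j.castSucc) (p := p) (φ := fun y => y⁻¹)
      (diff_Fr hΩopen hNsm hNpos hp.1) (hasDerivAt_inv hp.2.ne')
  rw [h, wD_ofReal_Fr_cs hΩopen hNsm hNpos hp.1 j]
  push_cast; ring

lemma wD_inv_Fr_last (hp : p ∈ Dom d μ N Ω) :
    wD (Fin.last d) (fun q => (((Fr d μ N q)⁻¹ : ℝ) : ℂ)) p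
      = ((((Fr d μ N p)^2)⁻¹ : ℝ) : ℂ) * (starRingEnd ℂ) (p (Fin.last d)) := by
  have h := wD_real_chain (h := Fr d μ N) (j := Fin.last d) (p := p) (φ := fun y => y⁻¹)
      (diff_Fr hΩopen hNsm hNpos hp.1) (hasDerivAt_inv hp.2.ne')
  rw [h, wD_ofReal_Fr_last hΩopen hNsm hNpos hp.1]
  push_cast; ring

lemma wDbar_CHpot_last (hp : p ∈ Dom d μ N Ω) :
    wDbar (Fin.last d) (CHpot d μ N) p = e1 d μ N p := by
  have hCH : CHpot d μ N = fun q => -((Real.log (Fr d μ N q) : ℝ) : ℂ) := rfl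
  rw [hCH, wDbar_neg,
    wDbar_real_chain (diff_Fr hΩopen hNsm hNpos hp.1) (Real.hasDerivAt_log hp.2.ne'),
    wDbar_ofReal_Fr_last hΩopen hNsm hNpos hp.1]
  unfold e1; ring

lemma wDbar_CHpot_cs (hp : p ∈ Dom d μ N Ω) (k : Fin d) :
    wDbar k.castSucc (CHpot d μ N) p = e2 d μ N k p := by
  have hCH : CHpot d μ N = fun q => -((Real.log (Fr d μ N q) : ℝ) : ℂ) := rfl
  rw [hCH, wDbar_neg,
    wDbar_real_chain (diff_Fr hΩopen hNsm hNpos hp.1) (Real.hasDerivAt_log hp.2.ne'),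
    wDbar_ofReal_Fr_cs hΩopen hNsm hNpos hp.1 k]
  unfold e2; ring

lemma diff_Bw_comp (hp : (fun i => p i.castSucc) ∈ Ω) (k : Fin d) :
    DifferentiableAt ℝ (fun q : Fin (d+1) → ℂ => Bw d μ N k (fun i => q i.castSucc)) p :=
  ((contDiffAt_Bw hΩopen hNsm hNpos hp k).differentiableAt (by simp)).comp p
    (cproj d).differentiableAt

lemma diff_inv_Fr (hp : p ∈ Dom d μ N Ω) :
    DifferentiableAt ℝ (fun q => (((Fr d μ N q)⁻¹ : ℝ) : ℂ)) p :=
  Complex.ofRealCLM.differentiableAt.comp p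
    ((diff_Fr hΩopen hNsm hNpos hp.1).inv hp.2.ne')

lemma gCH_cs_cs (hp : p ∈ Dom d μ N Ω) (j k : Fin d) :
    gCH d μ N j.castSucc k.castSucc p
      = -(Cw d μ N j k (fun i => p i.castSucc) * (((Fr d μ N p)⁻¹ : ℝ) : ℂ))
        + Bw d μ N k (fun i => p i.castSucc) * Aw d μ N j (fun i => p i.castSucc)
          * ((((Fr d μ N p)^2)⁻¹ : ℝ) : ℂ) := by
  have hev : wDbar k.castSucc (CHpot d μ N) =ᶠ[nhds p] e2 d μ N k :=
    Filter.eventuallyEq_of_mem ((isOpen_Dom hΩopen hNsm hNpos).mem_nhds hp)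
      (fun q hq => wDbar_CHpot_cs hΩopen hNsm hNpos hq k)
  rw [show gCH d μ N j.castSucc k.castSucc p
      = wD j.castSucc (wDbar k.castSucc (CHpot d μ N)) p from rfl,
    wD_congr _ hev]
  unfold e2
  rw [wD_neg, wD_mul (diff_Bw_comp hΩopen hNsm hNpos hp.1 k) (diff_inv_Fr hΩopen hNsm hNpos hp),
    wD_comp_castSucc (Bw d μ N k) ((contDiffAt_Bw hΩopen hNsm hNpos hp.1 k).differentiableAt (by simp)),
    wD_inv_Fr_cs hΩopen hNsm hNpos hp j]
  have hCw : wD j (Bw d μ N k) (fun i => p i.castSucc) = Cw d μ N j k (fun i => p i.castSucc) := rfl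
  rw [hCw]; ring

lemma gCH_cs_last (hp : p ∈ Dom d μ N Ω) (j : Fin d) :
    gCH d μ N j.castSucc (Fin.last d) p
      = -(p (Fin.last d) * Aw d μ N j (fun i => p i.castSucc)
          * ((((Fr d μ N p)^2)⁻¹ : ℝ) : ℂ)) := by
  have hev : wDbar (Fin.last d) (CHpot d μ N) =ᶠ[nhds p] e1 d μ N :=
    Filter.eventuallyEq_of_mem ((isOpen_Dom hΩopen hNsm hNpos).mem_nhds hp)
      (fun q hq => wDbar_CHpot_last hΩopen hNsm hNpos hq)
  rw [show gCH d μ N j.castSucc (Fin.last d) p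
      = wD j.castSucc (wDbar (Fin.last d) (CHpot d μ N)) p from rfl,
    wD_congr _ hev]
  unfold e1
  rw [wD_mul (diff_coord _) (diff_inv_Fr hΩopen hNsm hNpos hp), wD_coord,
    wD_inv_Fr_cs hΩopen hNsm hNpos hp j]
  simp [(Fin.castSucc_lt_last j).ne']
  ring

lemma gCH_last_cs (hp : p ∈ Dom d μ N Ω) (k : Fin d) :
    gCH d μ N (Fin.last d) k.castSucc p
      = -(Bw d μ N k (fun i => p i.castSucc) * ((((Fr d μ N p)^2)⁻¹ : ℝ) : ℂ)
          * (starRingEnd ℂ) (p (Fin.last d))) := by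
  have hev : wDbar k.castSucc (CHpot d μ N) =ᶠ[nhds p] e2 d μ N k :=
    Filter.eventuallyEq_of_mem ((isOpen_Dom hΩopen hNsm hNpos).mem_nhds hp)
      (fun q hq => wDbar_CHpot_cs hΩopen hNsm hNpos hq k)
  rw [show gCH d μ N (Fin.last d) k.castSucc p
      = wD (Fin.last d) (wDbar k.castSucc (CHpot d μ N)) p from rfl,
    wD_congr _ hev]
  unfold e2
  rw [wD_neg, wD_mul (diff_Bw_comp hΩopen hNsm hNpos hp.1 k) (diff_inv_Fr hΩopen hNsm hNpos hp),
    wD_last_comp (Bw d μ N k) ((contDiffAt_Bw hΩopen hNsm hNpos hp.1 k).differentiableAt (by simp)),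
    wD_inv_Fr_last hΩopen hNsm hNpos hp]
  ring

lemma gCH_last_last (hp : p ∈ Dom d μ N Ω) :
    gCH d μ N (Fin.last d) (Fin.last d) p
      = (((Fr d μ N p)⁻¹ : ℝ) : ℂ)
        + p (Fin.last d) * (starRingEnd ℂ) (p (Fin.last d)) * ((((Fr d μ N p)^2)⁻¹ : ℝ) : ℂ) := by
  have hev : wDbar (Fin.last d) (CHpot d μ N) =ᶠ[nhds p] e1 d μ N :=
    Filter.eventuallyEq_of_mem ((isOpen_Dom hΩopen hNsm hNpos).mem_nhds hp)
      (fun q hq => wDbar_CHpot_last hΩopen hNsm hNpos hq)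
  rw [show gCH d μ N (Fin.last d) (Fin.last d) p
      = wD (Fin.last d) (wDbar (Fin.last d) (CHpot d μ N)) p from rfl,
    wD_congr _ hev]
  unfold e1
  rw [wD_mul (diff_coord _) (diff_inv_Fr hΩopen hNsm hNpos hp), wD_coord,
    wD_inv_Fr_last hΩopen hNsm hNpos hp]
  simp
  ring

lemma gOm_eq (hz : z ∈ Ω) (j k : Fin d) :
    gOm d μ N j k z
      = -(Cw d μ N j k z * (((Xr d μ N z)⁻¹ : ℝ) : ℂ))
        + Aw d μ N j z * Bw d μ N k z * ((((Xr d μ N z)^2)⁻¹ : ℝ) : ℂ) := by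
  have hXd : DifferentiableAt ℝ (Xr d μ N) z :=
    (contDiffAt_Xr hΩopen hNsm hNpos hz).differentiableAt (by simp)
  have hNmu : (fun y => ((Xr d μ N y : ℝ) : ℂ)) = NmuC d μ N := rfl
  have hev : wDbar k (fun y => ((Real.log (N y ^ μ) : ℝ) : ℂ))
      =ᶠ[nhds z] fun y => Bw d μ N k y * (((Xr d μ N y)⁻¹ : ℝ) : ℂ) := by
    refine Filter.eventuallyEq_of_mem (hΩopen.mem_nhds hz) (fun y hy => ?_)
    have hXdy : DifferentiableAt ℝ (Xr d μ N) y :=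
      (contDiffAt_Xr hΩopen hNsm hNpos hy).differentiableAt (by simp)
    have hlog : (fun y' => ((Real.log (N y' ^ μ) : ℝ) : ℂ))
        = fun y' => ((Real.log (Xr d μ N y') : ℝ) : ℂ) := rfl
    rw [hlog, wDbar_real_chain hXdy (Real.hasDerivAt_log (Xr_pos hΩopen hNsm hNpos hy).ne'),
      hNmu]
    have : wDbar k (NmuC d μ N) y = Bw d μ N k y := rfl
    rw [this]; ring
  rw [show gOm d μ N j k z
      = -(wD j (wDbar k fun y => ((Real.log (N y ^ μ) : ℝ) : ℂ)) z) from rfl,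
    wD_congr _ hev]
  have hdBw : DifferentiableAt ℝ (Bw d μ N k) z :=
    (contDiffAt_Bw hΩopen hNsm hNpos hz k).differentiableAt (by simp)
  have hdinv : DifferentiableAt ℝ (fun y => (((Xr d μ N y)⁻¹ : ℝ) : ℂ)) z :=
    Complex.ofRealCLM.differentiableAt.comp z
      (hXd.inv (Xr_pos hΩopen hNsm hNpos hz).ne')
  rw [wD_mul hdBw hdinv,
    wD_real_chain (h := Xr d μ N) (j := j) (p := z) (φ := fun y => y⁻¹) hXd
      (hasDerivAt_inv (Xr_pos hΩopen hNsm hNpos hz).ne'), hNmu]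
  have h1 : wD j (Bw d μ N k) z = Cw d μ N j k z := rfl
  have h2 : wD j (NmuC d μ N) z = Aw d μ N j z := rfl
  rw [h1, h2]
  push_cast; ring

end derivs2
end CHsecond

noncomputable section CHdet
variable {d : ℕ} {μ γ : ℝ} {N : (Fin d → ℂ) → ℝ} {Ω : Set (Fin d → ℂ)}

lemma det_fromBlocks_one' {m : ℕ} (A : Matrix (Fin m) (Fin m) ℂ) (B : Matrix (Fin m) (Fin 1) ℂ)
    (C : Matrix (Fin 1) (Fin m) ℂ) (dd : ℂ) (hd : dd ≠ 0) :
    (Matrix.fromBlocks A B C (Matrix.of fun _ _ => dd)).det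
      = dd * (Matrix.of fun j k => A j k - B j 0 * C 0 k * dd⁻¹).det := by
  have h1 : (Matrix.of fun _ _ : Fin 1 => dd⁻¹) * (Matrix.of fun _ _ : Fin 1 => dd) = 1 := by
    ext i j
    fin_cases i; fin_cases j
    simp [Matrix.mul_apply, inv_mul_cancel₀ hd]
  have h2 : (Matrix.of fun _ _ : Fin 1 => dd) * (Matrix.of fun _ _ : Fin 1 => dd⁻¹) = 1 := by
    ext i j
    fin_cases i; fin_cases j
    simp [Matrix.mul_apply, mul_inv_cancel₀ hd]
  letI inst : Invertible (Matrix.of fun _ _ : Fin 1 => dd) :=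
    ⟨Matrix.of fun _ _ => dd⁻¹, h1, h2⟩
  rw [Matrix.det_fromBlocks₂₂]
  have hD : (Matrix.of fun _ _ : Fin 1 => dd).det = dd := by
    rw [Matrix.det_fin_one]; rfl
  have hinv : (⅟(Matrix.of fun _ _ : Fin 1 => dd) : Matrix (Fin 1) (Fin 1) ℂ)
      = Matrix.of fun _ _ => dd⁻¹ := rfl
  rw [hD, hinv]
  have h3 : A - B * (Matrix.of fun _ _ : Fin 1 => dd⁻¹) * C
      = Matrix.of fun j k => A j k - B j 0 * C 0 k * dd⁻¹ := by
    ext j k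
    simp [Matrix.mul_apply, Matrix.sub_apply, Fin.sum_univ_one]
    ring
  rw [h3]

lemma gCHmat_blocks (p : Fin (d+1) → ℂ) :
    gCHmat d μ N p = (Matrix.fromBlocks
      (Matrix.of fun j k => gCH d μ N j.castSucc k.castSucc p)
      (Matrix.of fun j (_ : Fin 1) => gCH d μ N j.castSucc (Fin.last d) p)
      (Matrix.of fun (_ : Fin 1) k => gCH d μ N (Fin.last d) k.castSucc p)
      (Matrix.of fun (_ : Fin 1) (_ : Fin 1) =>
        gCH d μ N (Fin.last d) (Fin.last d) p)).submatrix
      finSumFinEquiv.symm finSumFinEquiv.symm := by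
  ext α β
  refine Fin.lastCases ?_ (fun j => ?_) α <;> [skip; skip] <;>
    refine Fin.lastCases ?_ (fun k => ?_) β <;>
      simp [gCHmat, Matrix.submatrix_apply, Fin.castSucc]

end CHdet

noncomputable section CHdet2
variable {d : ℕ} {μ γ : ℝ} {N : (Fin d → ℂ) → ℝ} {Ω : Set (Fin d → ℂ)}

section dd
variable (hΩopen : IsOpen Ω) (hNsm : ContDiffOn ℝ (⊤ : ℕ∞) N Ω) (hNpos : ∀ z ∈ Ω, 0 < N z)
  {p : Fin (d+1) → ℂ}
include hΩopen hNsm hNpos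

lemma abs_last_eq (hp : p ∈ Dom d μ N Ω) :
    ‖p (Fin.last d)‖ ^ 2
      = Xr d μ N (fun i => p i.castSucc) - Fr d μ N p := by
  simp [Fr, Xr]

lemma mul_conj_last (hp : p ∈ Dom d μ N Ω) :
    p (Fin.last d) * (starRingEnd ℂ) (p (Fin.last d))
      = ((Xr d μ N (fun i => p i.castSucc) : ℝ) : ℂ) - ((Fr d μ N p : ℝ) : ℂ) := by
  rw [Complex.mul_conj, show Complex.normSq (p (Fin.last d))
      = Xr d μ N (fun i => p i.castSucc) - Fr d μ N p by
    rw [← Complex.sq_norm, abs_last_eq hΩopen hNsm hNpos hp]]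
  push_cast; ring

lemma gCH_last_last' (hp : p ∈ Dom d μ N Ω) :
    gCH d μ N (Fin.last d) (Fin.last d) p
      = ((Xr d μ N (fun i => p i.castSucc) / (Fr d μ N p)^2 : ℝ) : ℂ) := by
  rw [gCH_last_last hΩopen hNsm hNpos hp, mul_conj_last hΩopen hNsm hNpos hp]
  have hF : Fr d μ N p ≠ 0 := hp.2.ne'
  push_cast
  field_simp
  ring

lemma det_gCHmat (hμ : 0 < μ) (hMA : ∀ z ∈ Ω, (gOmMat d μ N z).det = ((N z ^ (-γ) : ℝ) : ℂ))
    (hp : p ∈ Dom d μ N Ω) :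
    (gCHmat d μ N p).det
      = (((Xr d μ N (fun i => p i.castSucc))^(d+1)
          * N (fun i => p i.castSucc) ^ (-γ) / (Fr d μ N p)^(d+2) : ℝ) : ℂ) := by
  have hz : (fun i => p i.castSucc) ∈ Ω := hp.1
  have hX : 0 < Xr d μ N (fun i => p i.castSucc) := Xr_pos hΩopen hNsm hNpos hz
  have hF : 0 < Fr d μ N p := hp.2
  have hddR : (0 : ℝ) < Xr d μ N (fun i => p i.castSucc) / (Fr d μ N p)^2 :=
    div_pos hX (by positivity)
  have hdd : gCH d μ N (Fin.last d) (Fin.last d) p ≠ 0 := by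
    rw [gCH_last_last' hΩopen hNsm hNpos hp]
    exact_mod_cast hddR.ne'
  rw [gCHmat_blocks, Matrix.det_submatrix_equiv_self, det_fromBlocks_one' _ _ _ _ hdd]
  have hSchur : (Matrix.of fun j k =>
        (Matrix.of fun j k => gCH d μ N j.castSucc k.castSucc p) j k
          - (Matrix.of fun j (_ : Fin 1) => gCH d μ N j.castSucc (Fin.last d) p) j 0
            * (Matrix.of fun (_ : Fin 1) k => gCH d μ N (Fin.last d) k.castSucc p) 0 k
            * (gCH d μ N (Fin.last d) (Fin.last d) p)⁻¹)
      = ((Xr d μ N (fun i => p i.castSucc) / Fr d μ N p : ℝ) : ℂ)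
          • gOmMat d μ N (fun i => p i.castSucc) := by
    ext j k
    simp only [Matrix.of_apply, Matrix.smul_apply, gOmMat, smul_eq_mul]
    rw [gCH_cs_cs hΩopen hNsm hNpos hp j k, gCH_cs_last hΩopen hNsm hNpos hp j,
      gCH_last_cs hΩopen hNsm hNpos hp k, gCH_last_last' hΩopen hNsm hNpos hp,
      gOm_eq hΩopen hNsm hNpos hz j k]
    rw [show -(p (Fin.last d) * Aw d μ N j (fun i => p i.castSucc)
          * ((((Fr d μ N p)^2)⁻¹ : ℝ) : ℂ))
        * -(Bw d μ N k (fun i => p i.castSucc) * ((((Fr d μ N p)^2)⁻¹ : ℝ) : ℂ)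
          * (starRingEnd ℂ) (p (Fin.last d)))
        = (p (Fin.last d) * (starRingEnd ℂ) (p (Fin.last d)))
          * (Aw d μ N j (fun i => p i.castSucc) * Bw d μ N k (fun i => p i.castSucc)
            * (((((Fr d μ N p)^2)⁻¹ : ℝ) : ℂ) * ((((Fr d μ N p)^2)⁻¹ : ℝ) : ℂ))) from by ring,
      mul_conj_last hΩopen hNsm hNpos hp]
    push_cast
    field_simp
    ring
  rw [hSchur, Matrix.det_smul, hMA _ hz, gCH_last_last' hΩopen hNsm hNpos hp]
  simp only [Fintype.card_fin]
  push_cast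
  have hF' : ((Fr d μ N p : ℝ) : ℂ) ≠ 0 := by exact_mod_cast hF.ne'
  field_simp
  rw [div_pow]
  field_simp
  ring
end dd
end CHdet2

noncomputable section CHric
variable {d : ℕ} {μ γ : ℝ} {N : (Fin d → ℂ) → ℝ} {Ω : Set (Fin d → ℂ)}

/-- explicit formula for `∂̄_{z_k} log det g` -/
def Ek (d : ℕ) (μ γ : ℝ) (N : (Fin d → ℂ) → ℝ) (k : Fin d) : (Fin (d+1) → ℂ) → ℂ :=
  fun q => Bw d μ N k (fun i => q i.castSucc) *
    ((((μ*((d:ℝ)+1) - γ) * μ⁻¹ : ℝ) : ℂ)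
        * (((Xr d μ N (fun i => q i.castSucc))⁻¹ : ℝ) : ℂ)
      - (((d:ℝ)+2 : ℝ) : ℂ) * (((Fr d μ N q)⁻¹ : ℝ) : ℂ))

/-- explicit formula for `∂̄_w log det g` -/
def El (d : ℕ) (μ : ℝ) (N : (Fin d → ℂ) → ℝ) : (Fin (d+1) → ℂ) → ℂ :=
  fun q => (((d:ℝ)+2 : ℝ) : ℂ) * (q (Fin.last d) * (((Fr d μ N q)⁻¹ : ℝ) : ℂ))

section ric
variable (hΩopen : IsOpen Ω) (hNsm : ContDiffOn ℝ (⊤ : ℕ∞) N Ω) (hNpos : ∀ z ∈ Ω, 0 < N z)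
  (hμ : 0 < μ) (hMA : ∀ z ∈ Ω, (gOmMat d μ N z).det = ((N z ^ (-γ) : ℝ) : ℂ))
  {p : Fin (d+1) → ℂ}
include hΩopen hNsm hNpos hμ hMA

lemma logdet_eq (hp : p ∈ Dom d μ N Ω) :
    Complex.log ((gCHmat d μ N p).det)
      = (((μ*((d:ℝ)+1) - γ) * Real.log (N (fun i => p i.castSucc))
          - ((d:ℝ)+2) * Real.log (Fr d μ N p) : ℝ) : ℂ) := by
  have hz : (fun i => p i.castSucc) ∈ Ω := hp.1
  have hN : 0 < N (fun i => p i.castSucc) := hNpos _ hz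
  have hX : 0 < Xr d μ N (fun i => p i.castSucc) := Xr_pos hΩopen hNsm hNpos hz
  have hF : 0 < Fr d μ N p := hp.2
  rw [det_gCHmat hΩopen hNsm hNpos hμ hMA hp]
  have hpos : 0 < (Xr d μ N (fun i => p i.castSucc))^(d+1)
      * N (fun i => p i.castSucc) ^ (-γ) / (Fr d μ N p)^(d+2) := by positivity
  rw [← Complex.ofReal_log hpos.le]
  congr 1
  rw [Real.log_div (by positivity) (by positivity), Real.log_mul (by positivity) (by positivity),
    Real.log_pow, Real.log_pow, Real.log_rpow hN]
  have : Real.log (Xr d μ N (fun i => p i.castSucc)) = μ * Real.log (N (fun i => p i.castSucc)) :=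
    Real.log_rpow hN μ
  rw [this]
  push_cast
  ring

lemma wDbar_logdet_cs (hp : p ∈ Dom d μ N Ω) (k : Fin d) :
    wDbar k.castSucc (fun q => Complex.log ((gCHmat d μ N q).det)) p = Ek d μ γ N k p := by
  have hz : (fun i => p i.castSucc) ∈ Ω := hp.1
  have hev : (fun q => Complex.log ((gCHmat d μ N q).det)) =ᶠ[nhds p]
      fun q => (((μ*((d:ℝ)+1) - γ : ℝ)) : ℂ)
          * ((Real.log (N (fun i => q i.castSucc)) : ℝ) : ℂ)
        - (((d:ℝ)+2 : ℝ) : ℂ) * ((Real.log (Fr d μ N q) : ℝ) : ℂ) := by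
    refine Filter.eventuallyEq_of_mem ((isOpen_Dom hΩopen hNsm hNpos).mem_nhds hp)
      (fun q hq => ?_)
    rw [logdet_eq hΩopen hNsm hNpos hμ hMA hq]; push_cast; ring
  rw [wDbar_congr _ hev]
  -- differentiability of the two pieces
  have hdlogN : ∀ q, q ∈ Dom d μ N Ω → DifferentiableAt ℝ
      (fun q' : Fin (d+1) → ℂ => ((Real.log (N (fun i => q' i.castSucc)) : ℝ) : ℂ)) q := by
    intro q hq
    exact Complex.ofRealCLM.differentiableAt.comp q
      ((((hNsm.contDiffAt (hΩopen.mem_nhds hq.1)).differentiableAt (by simp)).comp q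
          (cproj d).differentiableAt).log (hNpos _ hq.1).ne')
  have hdlogF : DifferentiableAt ℝ
      (fun q' : Fin (d+1) → ℂ => ((Real.log (Fr d μ N q') : ℝ) : ℂ)) p :=
    Complex.ofRealCLM.differentiableAt.comp p
      ((diff_Fr hΩopen hNsm hNpos hp.1).log hp.2.ne')
  rw [wDbar_sub ((hdlogN p hp).const_mul _) (hdlogF.const_mul _),
    wDbar_const_mul _ (hdlogN p hp), wDbar_const_mul _ hdlogF]
  -- second piece: ∂̄ log F
  rw [wDbar_real_chain (diff_Fr hΩopen hNsm hNpos hp.1) (Real.hasDerivAt_log hp.2.ne'),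
    wDbar_ofReal_Fr_cs hΩopen hNsm hNpos hp.1 k]
  -- first piece: log N = μ⁻¹ log Xr on Ω
  have hev2 : (fun q' : Fin (d+1) → ℂ => ((Real.log (N (fun i => q' i.castSucc)) : ℝ) : ℂ))
      =ᶠ[nhds p] fun q' => ((μ⁻¹ : ℝ) : ℂ)
          * ((Real.log (Xr d μ N (fun i => q' i.castSucc)) : ℝ) : ℂ) := by
    refine Filter.eventuallyEq_of_mem
      ((hΩopen.preimage (cproj d).continuous).mem_nhds (by exact hz)) (fun q hq => ?_)
    have : Real.log (Xr d μ N (fun i => q i.castSucc))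
        = μ * Real.log (N (fun i => q i.castSucc)) := Real.log_rpow (hNpos _ hq) μ
    rw [this]
    push_cast
    field_simp
  rw [wDbar_congr _ hev2]
  have hXpi : DifferentiableAt ℝ (fun q' : Fin (d+1) → ℂ => Xr d μ N (fun i => q' i.castSucc)) p :=
    ((contDiffAt_Xr hΩopen hNsm hNpos hz).differentiableAt (by simp)).comp (g := Xr d μ N) p
      (cproj d).differentiableAt
  have hXlog : DifferentiableAt ℝ
      (fun q' : Fin (d+1) → ℂ => ((Real.log (Xr d μ N (fun i => q' i.castSucc)) : ℝ) : ℂ)) p :=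
    Complex.ofRealCLM.differentiableAt.comp p
      (hXpi.log (Xr_pos hΩopen hNsm hNpos hz).ne')
  rw [wDbar_const_mul _ hXlog,
    wDbar_real_chain hXpi (Real.hasDerivAt_log (Xr_pos hΩopen hNsm hNpos hz).ne')]
  have hNmuPi : (fun q' : Fin (d+1) → ℂ => ((Xr d μ N (fun i => q' i.castSucc) : ℝ) : ℂ))
      = fun q' => NmuC d μ N (fun i => q' i.castSucc) := rfl
  rw [hNmuPi, wDbar_comp_castSucc (NmuC d μ N)
    ((contDiffAt_NmuC hΩopen hNsm hNpos hz).differentiableAt (by simp))]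
  have hBw : wDbar k (NmuC d μ N) (fun i => p i.castSucc)
      = Bw d μ N k (fun i => p i.castSucc) := rfl
  rw [hBw]
  unfold Ek
  push_cast
  ring

lemma wDbar_logdet_last (hp : p ∈ Dom d μ N Ω) :
    wDbar (Fin.last d) (fun q => Complex.log ((gCHmat d μ N q).det)) p = El d μ N p := by
  have hz : (fun i => p i.castSucc) ∈ Ω := hp.1
  have hev : (fun q => Complex.log ((gCHmat d μ N q).det)) =ᶠ[nhds p]
      fun q => (((μ*((d:ℝ)+1) - γ : ℝ)) : ℂ)
          * ((Real.log (N (fun i => q i.castSucc)) : ℝ) : ℂ)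
        - (((d:ℝ)+2 : ℝ) : ℂ) * ((Real.log (Fr d μ N q) : ℝ) : ℂ) := by
    refine Filter.eventuallyEq_of_mem ((isOpen_Dom hΩopen hNsm hNpos).mem_nhds hp)
      (fun q hq => ?_)
    rw [logdet_eq hΩopen hNsm hNpos hμ hMA hq]; push_cast; ring
  rw [wDbar_congr _ hev]
  have hdlogN : DifferentiableAt ℝ
      (fun q' : Fin (d+1) → ℂ => ((Real.log (N (fun i => q' i.castSucc)) : ℝ) : ℂ)) p :=
    Complex.ofRealCLM.differentiableAt.comp p
      ((((hNsm.contDiffAt (hΩopen.mem_nhds hz)).differentiableAt (by simp)).comp p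
          (cproj d).differentiableAt).log (hNpos _ hz).ne')
  have hdlogF : DifferentiableAt ℝ
      (fun q' : Fin (d+1) → ℂ => ((Real.log (Fr d μ N q') : ℝ) : ℂ)) p :=
    Complex.ofRealCLM.differentiableAt.comp p
      ((diff_Fr hΩopen hNsm hNpos hp.1).log hp.2.ne')
  rw [wDbar_sub (hdlogN.const_mul _) (hdlogF.const_mul _),
    wDbar_const_mul _ hdlogN, wDbar_const_mul _ hdlogF,
    wDbar_real_chain (diff_Fr hΩopen hNsm hNpos hp.1) (Real.hasDerivAt_log hp.2.ne'),
    wDbar_ofReal_Fr_last hΩopen hNsm hNpos hp.1]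
  have hev2 : (fun q' : Fin (d+1) → ℂ => ((Real.log (N (fun i => q' i.castSucc)) : ℝ) : ℂ))
      =ᶠ[nhds p] fun q' => ((μ⁻¹ : ℝ) : ℂ)
          * ((Real.log (Xr d μ N (fun i => q' i.castSucc)) : ℝ) : ℂ) := by
    refine Filter.eventuallyEq_of_mem
      ((hΩopen.preimage (cproj d).continuous).mem_nhds (by exact hz)) (fun q hq => ?_)
    have : Real.log (Xr d μ N (fun i => q i.castSucc))
        = μ * Real.log (N (fun i => q i.castSucc)) := Real.log_rpow (hNpos _ hq) μ
    rw [this]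
    push_cast
    field_simp
  rw [wDbar_congr _ hev2]
  have hXpi : DifferentiableAt ℝ (fun q' : Fin (d+1) → ℂ => Xr d μ N (fun i => q' i.castSucc)) p :=
    ((contDiffAt_Xr hΩopen hNsm hNpos hz).differentiableAt (by simp)).comp (g := Xr d μ N) p
      (cproj d).differentiableAt
  have hXlog : DifferentiableAt ℝ
      (fun q' : Fin (d+1) → ℂ => ((Real.log (Xr d μ N (fun i => q' i.castSucc)) : ℝ) : ℂ)) p :=
    Complex.ofRealCLM.differentiableAt.comp p
      (hXpi.log (Xr_pos hΩopen hNsm hNpos hz).ne')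
  rw [wDbar_const_mul _ hXlog,
    wDbar_real_chain hXpi (Real.hasDerivAt_log (Xr_pos hΩopen hNsm hNpos hz).ne')]
  have hNmuPi : (fun q' : Fin (d+1) → ℂ => ((Xr d μ N (fun i => q' i.castSucc) : ℝ) : ℂ))
      = fun q' => NmuC d μ N (fun i => q' i.castSucc) := rfl
  rw [hNmuPi, wDbar_last_comp (NmuC d μ N)
    ((contDiffAt_NmuC hΩopen hNsm hNpos hz).differentiableAt (by simp))]
  unfold El
  push_cast
  ring

end ric
end CHric

noncomputable section CHric2
variable {d : ℕ} {μ γ : ℝ} {N : (Fin d → ℂ) → ℝ} {Ω : Set (Fin d → ℂ)}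

section ric2
variable (hΩopen : IsOpen Ω) (hNsm : ContDiffOn ℝ (⊤ : ℕ∞) N Ω) (hNpos : ∀ z ∈ Ω, 0 < N z)
  (hμ : 0 < μ) (hMA : ∀ z ∈ Ω, (gOmMat d μ N z).det = ((N z ^ (-γ) : ℝ) : ℂ))
  {p : Fin (d+1) → ℂ}
include hΩopen hNsm hNpos hμ hMA

lemma diff_bracket (hp : p ∈ Dom d μ N Ω) :
    DifferentiableAt ℝ (fun q : Fin (d+1) → ℂ =>
      (((μ*((d:ℝ)+1) - γ) * μ⁻¹ : ℝ) : ℂ)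
          * (((Xr d μ N (fun i => q i.castSucc))⁻¹ : ℝ) : ℂ)
        - (((d:ℝ)+2 : ℝ) : ℂ) * (((Fr d μ N q)⁻¹ : ℝ) : ℂ)) p := by
  have hz : (fun i => p i.castSucc) ∈ Ω := hp.1
  have hXpi : DifferentiableAt ℝ (fun q' : Fin (d+1) → ℂ => Xr d μ N (fun i => q' i.castSucc)) p :=
    ((contDiffAt_Xr hΩopen hNsm hNpos hz).differentiableAt (by simp)).comp (g := Xr d μ N) p
      (cproj d).differentiableAt
  have h1 : DifferentiableAt ℝ
      (fun q : Fin (d+1) → ℂ => (((Xr d μ N (fun i => q i.castSucc))⁻¹ : ℝ) : ℂ)) p :=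
    Complex.ofRealCLM.differentiableAt.comp p (hXpi.inv (Xr_pos hΩopen hNsm hNpos hz).ne')
  exact (h1.const_mul _).sub ((diff_inv_Fr hΩopen hNsm hNpos hp).const_mul _)

lemma RicCH_cs_cs (hp : p ∈ Dom d μ N Ω) (j k : Fin d)
    (hB : Bw d μ N k (fun i => p i.castSucc) = 0) :
    RicCH d μ N j.castSucc k.castSucc p
      = -(Cw d μ N j k (fun i => p i.castSucc) *
          ((((μ*((d:ℝ)+1) - γ) * μ⁻¹ : ℝ) : ℂ)
              * (((Xr d μ N (fun i => p i.castSucc))⁻¹ : ℝ) : ℂ)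
            - (((d:ℝ)+2 : ℝ) : ℂ) * (((Fr d μ N p)⁻¹ : ℝ) : ℂ))) := by
  have hev : wDbar k.castSucc (fun q => Complex.log ((gCHmat d μ N q).det))
      =ᶠ[nhds p] Ek d μ γ N k :=
    Filter.eventuallyEq_of_mem ((isOpen_Dom hΩopen hNsm hNpos).mem_nhds hp)
      (fun q hq => wDbar_logdet_cs hΩopen hNsm hNpos hμ hMA hq k)
  rw [show RicCH d μ N j.castSucc k.castSucc p
      = -(wD j.castSucc (wDbar k.castSucc fun q => Complex.log ((gCHmat d μ N q).det)) p)
      from rfl, wD_congr _ hev]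
  unfold Ek
  rw [wD_mul (diff_Bw_comp hΩopen hNsm hNpos hp.1 k)
      (diff_bracket hΩopen hNsm hNpos hμ hMA hp),
    wD_comp_castSucc (Bw d μ N k)
      ((contDiffAt_Bw hΩopen hNsm hNpos hp.1 k).differentiableAt (by simp)), hB]
  have hCw : wD j (Bw d μ N k) (fun i => p i.castSucc)
      = Cw d μ N j k (fun i => p i.castSucc) := rfl
  rw [hCw]
  ring

lemma RicCH_last_cs (hp : p ∈ Dom d μ N Ω) (k : Fin d)
    (hB : Bw d μ N k (fun i => p i.castSucc) = 0) :
    RicCH d μ N (Fin.last d) k.castSucc p = 0 := by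
  have hev : wDbar k.castSucc (fun q => Complex.log ((gCHmat d μ N q).det))
      =ᶠ[nhds p] Ek d μ γ N k :=
    Filter.eventuallyEq_of_mem ((isOpen_Dom hΩopen hNsm hNpos).mem_nhds hp)
      (fun q hq => wDbar_logdet_cs hΩopen hNsm hNpos hμ hMA hq k)
  rw [show RicCH d μ N (Fin.last d) k.castSucc p
      = -(wD (Fin.last d) (wDbar k.castSucc fun q => Complex.log ((gCHmat d μ N q).det)) p)
      from rfl, wD_congr _ hev]
  unfold Ek
  rw [wD_mul (diff_Bw_comp hΩopen hNsm hNpos hp.1 k)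
      (diff_bracket hΩopen hNsm hNpos hμ hMA hp),
    wD_last_comp (Bw d μ N k)
      ((contDiffAt_Bw hΩopen hNsm hNpos hp.1 k).differentiableAt (by simp)), hB]
  ring

lemma RicCH_cs_last (hp : p ∈ Dom d μ N Ω) (j : Fin d)
    (hA : Aw d μ N j (fun i => p i.castSucc) = 0) :
    RicCH d μ N j.castSucc (Fin.last d) p = 0 := by
  have hev : wDbar (Fin.last d) (fun q => Complex.log ((gCHmat d μ N q).det))
      =ᶠ[nhds p] El d μ N :=
    Filter.eventuallyEq_of_mem ((isOpen_Dom hΩopen hNsm hNpos).mem_nhds hp)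
      (fun q hq => wDbar_logdet_last hΩopen hNsm hNpos hμ hMA hq)
  rw [show RicCH d μ N j.castSucc (Fin.last d) p
      = -(wD j.castSucc (wDbar (Fin.last d) fun q => Complex.log ((gCHmat d μ N q).det)) p)
      from rfl, wD_congr _ hev]
  unfold El
  rw [wD_const_mul _ ((diff_coord _).fun_mul (diff_inv_Fr hΩopen hNsm hNpos hp)),
    wD_mul (diff_coord _) (diff_inv_Fr hΩopen hNsm hNpos hp), wD_coord,
    wD_inv_Fr_cs hΩopen hNsm hNpos hp j, hA]
  simp [(Fin.castSucc_lt_last j).ne']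

lemma RicCH_last_last (hp : p ∈ Dom d μ N Ω) :
    RicCH d μ N (Fin.last d) (Fin.last d) p
      = -((((d:ℝ)+2 : ℝ) : ℂ)
          * ((Xr d μ N (fun i => p i.castSucc) / (Fr d μ N p)^2 : ℝ) : ℂ)) := by
  have hev : wDbar (Fin.last d) (fun q => Complex.log ((gCHmat d μ N q).det))
      =ᶠ[nhds p] El d μ N :=
    Filter.eventuallyEq_of_mem ((isOpen_Dom hΩopen hNsm hNpos).mem_nhds hp)
      (fun q hq => wDbar_logdet_last hΩopen hNsm hNpos hμ hMA hq)
  rw [show RicCH d μ N (Fin.last d) (Fin.last d) p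
      = -(wD (Fin.last d) (wDbar (Fin.last d) fun q => Complex.log ((gCHmat d μ N q).det)) p)
      from rfl, wD_congr _ hev]
  unfold El
  rw [wD_const_mul _ ((diff_coord _).fun_mul (diff_inv_Fr hΩopen hNsm hNpos hp)),
    wD_mul (diff_coord _) (diff_inv_Fr hΩopen hNsm hNpos hp), wD_coord,
    wD_inv_Fr_last hΩopen hNsm hNpos hp]
  simp only [if_pos rfl]
  rw [show p (Fin.last d) * (((((Fr d μ N p)^2)⁻¹ : ℝ) : ℂ) * (starRingEnd ℂ) (p (Fin.last d)))
      = (p (Fin.last d) * (starRingEnd ℂ) (p (Fin.last d))) * ((((Fr d μ N p)^2)⁻¹ : ℝ) : ℂ)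
      from by ring,
    mul_conj_last hΩopen hNsm hNpos hp]
  have hF : Fr d μ N p ≠ 0 := hp.2.ne'
  push_cast
  field_simp
  ring

end ric2
end CHric2

noncomputable section CHfinal
variable {d : ℕ} {μ γ : ℝ} {N : (Fin d → ℂ) → ℝ} {Ω : Set (Fin d → ℂ)}

lemma proj_snoc (w : ℂ) :
    (fun i => (Fin.snoc (0 : Fin d → ℂ) w : Fin (d+1) → ℂ) i.castSucc)
      = (0 : Fin d → ℂ) := by
  funext i; simp

lemma Fr_snoc (hN0 : N 0 = 1) (w : ℂ) :
    Fr d μ N (Fin.snoc (0 : Fin d → ℂ) w) = 1 - ‖w‖ ^ 2 := by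
  have : Fr d μ N (Fin.snoc (0 : Fin d → ℂ) w)
      = N (fun i => (Fin.snoc (0 : Fin d → ℂ) w : Fin (d+1) → ℂ) i.castSucc) ^ μ
        - ‖(Fin.snoc (0 : Fin d → ℂ) w : Fin (d+1) → ℂ) (Fin.last d)‖ ^ 2 := rfl
  rw [this, proj_snoc, hN0, Real.one_rpow, Fin.snoc_last]

lemma snoc_mem_Dom (h0 : (0 : Fin d → ℂ) ∈ Ω) (hN0 : N 0 = 1) {w : ℂ}
    (hw : ‖w‖ < 1) :
    (Fin.snoc (0 : Fin d → ℂ) w : Fin (d+1) → ℂ) ∈ Dom d μ N Ω := by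
  constructor
  · rw [proj_snoc]; exact h0
  · rw [Fr_snoc hN0]
    have h2 : ‖w‖ ^ 2 < 1 :=
      pow_lt_one₀ (norm_nonneg w) hw (by norm_num)
    linarith

lemma quad_sum (G Gi : Matrix (Fin d) (Fin d) ℂ) (h : Gi * G = 1) :
    (∑ j : Fin d, ∑ k : Fin d, ∑ e : Fin d, ∑ f : Fin d,
      Gi f e * Gi j k * G e j * G k f) = (d : ℂ) := by
  have h1 : ∀ f j, (∑ e, Gi f e * G e j) = (1 : Matrix (Fin d) (Fin d) ℂ) f j := by
    intro f j; rw [← h, Matrix.mul_apply]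
  calc (∑ j : Fin d, ∑ k : Fin d, ∑ e : Fin d, ∑ f : Fin d, Gi f e * Gi j k * G e j * G k f)
      = ∑ j, ∑ k, Gi j k * ∑ f, (∑ e, Gi f e * G e j) * G k f := by
        refine Finset.sum_congr rfl fun j _ => Finset.sum_congr rfl fun k _ => ?_
        rw [Finset.mul_sum, Finset.sum_comm]
        refine Finset.sum_congr rfl fun f _ => ?_
        rw [Finset.sum_mul, Finset.mul_sum]
        exact Finset.sum_congr rfl fun e _ => by ring
    _ = ∑ j, ∑ k, Gi j k * G k j := by
        refine Finset.sum_congr rfl fun j _ => Finset.sum_congr rfl fun k _ => ?_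
        congr 1
        rw [show (∑ f, (∑ e, Gi f e * G e j) * G k f) = ∑ f, (1 : Matrix (Fin d) (Fin d) ℂ) f j * G k f
          from Finset.sum_congr rfl fun f _ => by rw [h1 f j]]
        simp [Matrix.one_apply]
    _ = ∑ j, (1 : Matrix (Fin d) (Fin d) ℂ) j j := by
        refine Finset.sum_congr rfl fun j _ => ?_
        rw [← Matrix.mul_apply, h]
    _ = (d : ℂ) := by simp [Matrix.one_apply]

end CHfinal

noncomputable section CHinv
variable {d : ℕ} {μ γ : ℝ} {N : (Fin d → ℂ) → ℝ} {Ω : Set (Fin d → ℂ)}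

section fin2
variable (hΩopen : IsOpen Ω) (hNsm : ContDiffOn ℝ (⊤ : ℕ∞) N Ω) (hNpos : ∀ z ∈ Ω, 0 < N z)
  (hμ : 0 < μ) (h0 : (0 : Fin d → ℂ) ∈ Ω) (hN0 : N 0 = 1)
  (hA0 : ∀ j, Aw d μ N j 0 = 0) (hB0 : ∀ k, Bw d μ N k 0 = 0)
  {w : ℂ} (hw : ‖w‖ < 1)
include hΩopen hNsm hNpos h0 hN0 hA0 hB0 hw

lemma Xr_zero : Xr d μ N 0 = 1 := by simp [Xr, hN0]

lemma Cw_zero (j k : Fin d) : Cw d μ N j k 0 = -(gOm d μ N j k 0) := by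
  have h := gOm_eq (μ := μ) hΩopen hNsm hNpos h0 j k
  rw [hA0 j, hB0 k, Xr_zero hΩopen hNsm hNpos h0 hN0 hA0 hB0 hw] at h
  simp at h
  rw [h, neg_neg]

lemma gCHmat_snoc_blocks :
    gCHmat d μ N (Fin.snoc (0 : Fin d → ℂ) w)
      = (Matrix.fromBlocks
          ((((1 - ‖w‖ ^ 2)⁻¹ : ℝ) : ℂ) • gOmMat d μ N 0) 0 0
          (Matrix.of fun _ _ => ((((1 - ‖w‖ ^ 2)^2)⁻¹ : ℝ) : ℂ))).submatrix
        finSumFinEquiv.symm finSumFinEquiv.symm := by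
  have hp₀ := snoc_mem_Dom (μ := μ) h0 hN0 hw
  rw [gCHmat_blocks]
  have hbl : (Matrix.fromBlocks
      (Matrix.of fun j k => gCH d μ N j.castSucc k.castSucc (Fin.snoc (0:Fin d → ℂ) w))
      (Matrix.of fun j (_ : Fin 1) =>
        gCH d μ N j.castSucc (Fin.last d) (Fin.snoc (0:Fin d → ℂ) w))
      (Matrix.of fun (_ : Fin 1) k =>
        gCH d μ N (Fin.last d) k.castSucc (Fin.snoc (0:Fin d → ℂ) w))
      (Matrix.of fun (_ : Fin 1) (_ : Fin 1) =>
        gCH d μ N (Fin.last d) (Fin.last d) (Fin.snoc (0:Fin d → ℂ) w)))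
      = Matrix.fromBlocks
          ((((1 - ‖w‖ ^ 2)⁻¹ : ℝ) : ℂ) • gOmMat d μ N 0) 0 0
          (Matrix.of fun _ _ => ((((1 - ‖w‖ ^ 2)^2)⁻¹ : ℝ) : ℂ)) := by
    ext i j
    cases i with
    | inl i =>
      cases j with
      | inl j =>
        rw [Matrix.fromBlocks_apply₁₁, Matrix.fromBlocks_apply₁₁, Matrix.of_apply,
          gCH_cs_cs hΩopen hNsm hNpos hp₀ i j, proj_snoc w,
          Cw_zero hΩopen hNsm hNpos h0 hN0 hA0 hB0 hw i j, hB0 j, Fr_snoc hN0 w]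
        simp [Matrix.smul_apply, gOmMat, smul_eq_mul]
        ring
      | inr j =>
        rw [Matrix.fromBlocks_apply₁₂, Matrix.fromBlocks_apply₁₂, Matrix.of_apply,
          gCH_cs_last hΩopen hNsm hNpos hp₀ i, proj_snoc w, hA0 i]
        simp
    | inr i =>
      cases j with
      | inl j =>
        rw [Matrix.fromBlocks_apply₂₁, Matrix.fromBlocks_apply₂₁, Matrix.of_apply,
          gCH_last_cs hΩopen hNsm hNpos hp₀ j, proj_snoc w, hB0 j]
        simp
      | inr j =>
        rw [Matrix.fromBlocks_apply₂₂, Matrix.fromBlocks_apply₂₂, Matrix.of_apply,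
          gCH_last_last' hΩopen hNsm hNpos hp₀, proj_snoc w,
          Xr_zero hΩopen hNsm hNpos h0 hN0 hA0 hB0 hw, Fr_snoc hN0 w]
        rw [Matrix.of_apply]
        push_cast
        ring
  rw [hbl]

lemma gCHmat_snoc_inv (hPD : (gOmMat d μ N 0).PosDef) :
    (gCHmat d μ N (Fin.snoc (0 : Fin d → ℂ) w))⁻¹
      = (Matrix.fromBlocks
          (((1 - ‖w‖ ^ 2 : ℝ) : ℂ) • (gOmMat d μ N 0)⁻¹) 0 0
          (Matrix.of fun _ _ => (((1 - ‖w‖ ^ 2)^2 : ℝ) : ℂ))).submatrix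
        finSumFinEquiv.symm finSumFinEquiv.symm := by
  have h2 : ‖w‖ ^ 2 < 1 := pow_lt_one₀ (norm_nonneg w) hw (by norm_num)
  have h1t : (0:ℝ) < 1 - ‖w‖ ^ 2 := by linarith
  have hU : IsUnit (gOmMat d μ N 0).det := hPD.det_pos.ne'.isUnit
  apply Matrix.inv_eq_right_inv
  rw [gCHmat_snoc_blocks hΩopen hNsm hNpos h0 hN0 hA0 hB0 hw,
    Matrix.submatrix_mul_equiv, Matrix.fromBlocks_multiply]
  have hA : (((1 - ‖w‖ ^ 2)⁻¹ : ℝ) : ℂ) • gOmMat d μ N 0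
        * (((1 - ‖w‖ ^ 2 : ℝ) : ℂ) • (gOmMat d μ N 0)⁻¹)
        + (0 : Matrix (Fin d) (Fin 1) ℂ) * (0 : Matrix (Fin 1) (Fin d) ℂ)
      = (1 : Matrix (Fin d) (Fin d) ℂ) := by
    rw [Matrix.zero_mul, add_zero, Matrix.smul_mul, Matrix.mul_smul, smul_smul,
      Matrix.mul_nonsing_inv _ hU]
    rw [show ((((1 - ‖w‖ ^ 2)⁻¹ : ℝ) : ℂ) * ((1 - ‖w‖ ^ 2 : ℝ) : ℂ)) = 1 by
      rw [← Complex.ofReal_mul, inv_mul_cancel₀ h1t.ne', Complex.ofReal_one]]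
    simp
  have hD : (0 : Matrix (Fin 1) (Fin d) ℂ) * (0 : Matrix (Fin d) (Fin 1) ℂ)
        + (Matrix.of fun _ _ => ((((1 - ‖w‖ ^ 2)^2)⁻¹ : ℝ) : ℂ))
          * (Matrix.of fun _ _ => (((1 - ‖w‖ ^ 2)^2 : ℝ) : ℂ))
      = (1 : Matrix (Fin 1) (Fin 1) ℂ) := by
    rw [Matrix.zero_mul, zero_add]
    ext i j
    fin_cases i; fin_cases j
    rw [Matrix.mul_apply]
    simp only [Fin.sum_univ_one, Matrix.of_apply, Matrix.one_apply]
    rw [show ((((1 - ‖w‖ ^ 2)^2)⁻¹ : ℝ) : ℂ) * (((1 - ‖w‖ ^ 2)^2 : ℝ) : ℂ) = 1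
      by rw [← Complex.ofReal_mul, inv_mul_cancel₀ (pow_ne_zero 2 h1t.ne'), Complex.ofReal_one]]
    simp
  rw [hA, hD]
  have hB : (((1 - ‖w‖ ^ 2)⁻¹ : ℝ) : ℂ) • gOmMat d μ N 0
        * (0 : Matrix (Fin d) (Fin 1) ℂ)
        + (0 : Matrix (Fin d) (Fin 1) ℂ)
          * (Matrix.of fun _ _ => (((1 - ‖w‖ ^ 2)^2 : ℝ) : ℂ))
      = (0 : Matrix (Fin d) (Fin 1) ℂ) := by
    simp; exact Matrix.zero_mul _
  have hC : (0 : Matrix (Fin 1) (Fin d) ℂ)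
        * (((1 - ‖w‖ ^ 2 : ℝ) : ℂ) • (gOmMat d μ N 0)⁻¹)
        + (Matrix.of fun _ _ => ((((1 - ‖w‖ ^ 2)^2)⁻¹ : ℝ) : ℂ))
          * (0 : Matrix (Fin 1) (Fin d) ℂ)
      = (0 : Matrix (Fin 1) (Fin d) ℂ) := by
    simp; exact Matrix.mul_zero _
  simp

end fin2
end CHinv

/-- squared norm of the Ricci tensor at (0,w). -/
theorem RicNorm2_at_zero (d : ℕ) (hd : 1 ≤ d) (γ μ : ℝ) (hγ : 0 < γ) (hμ : 0 < μ)
    (Ω : Set (Fin d → ℂ)) (hΩopen : IsOpen Ω) (hΩconn : IsPreconnected Ω)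
    (N : (Fin d → ℂ) → ℝ) (hNsm : ContDiffOn ℝ (⊤ : ℕ∞) N Ω) (hNpos : ∀ z ∈ Ω, 0 < N z)
    (h0 : (0 : Fin d → ℂ) ∈ Ω) (hN0 : N 0 = 1)
    (hHol : ∀ L : List (Fin d), L ≠ [] → L.foldr (fun j f => wD j f) (NmuC d μ N) 0 = 0)
    (hAhol : ∀ L : List (Fin d), L ≠ [] → L.foldr (fun j f => wDbar j f) (NmuC d μ N) 0 = 0)
    (hgOmPD : ∀ z ∈ Ω, (gOmMat d μ N z).PosDef)
    (hgPD : ∀ z ∈ Ω, ∀ w : ℂ, ‖w‖ ^ 2 < N z ^ μ →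
      (gCHmat d μ N (Fin.snoc z w)).PosDef)
    (hMA : ∀ z ∈ Ω, (gOmMat d μ N z).det = ((N z ^ (-γ) : ℝ) : ℂ))
    (w : ℂ) (hw : ‖w‖ < 1) :
    RicNorm2 d μ N (Fin.snoc (0 : Fin d → ℂ) w) =
      (((d : ℝ) * ((μ * ((d : ℝ) + 1) - γ) / μ) ^ 2 * (1 - ‖w‖ ^ 2) ^ 2 -
          2 * (d : ℝ) * ((d : ℝ) + 2) * ((μ * ((d : ℝ) + 1) - γ) / μ) *
            (1 - ‖w‖ ^ 2) +
          ((d : ℝ) + 1) * ((d : ℝ) + 2) ^ 2 : ℝ) : ℂ) := by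
  have hA0 : ∀ j, Aw d μ N j 0 = 0 := fun j => by
    simpa [Aw] using hHol [j] (by simp)
  have hB0 : ∀ k, Bw d μ N k 0 = 0 := fun k => by
    simpa [Bw] using hAhol [k] (by simp)
  have hPD : (gOmMat d μ N 0).PosDef := hgOmPD 0 h0
  have hU : IsUnit (gOmMat d μ N 0).det := hPD.det_pos.ne'.isUnit
  have hp₀ : (Fin.snoc (0 : Fin d → ℂ) w : Fin (d+1) → ℂ) ∈ Dom d μ N Ω :=
    snoc_mem_Dom (μ := μ) h0 hN0 hw
  have h2 : ‖w‖ ^ 2 < 1 := pow_lt_one₀ (norm_nonneg w) hw (by norm_num)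
  have h1t : (0:ℝ) < 1 - ‖w‖ ^ 2 := by linarith
  have hinv := gCHmat_snoc_inv hΩopen hNsm hNpos h0 hN0 hA0 hB0 hw hPD
  -- inverse metric entries
  have hI1 : ∀ j k : Fin d, (gCHmat d μ N (Fin.snoc (0 : Fin d → ℂ) w))⁻¹ j.castSucc k.castSucc
      = ((1 - ‖w‖ ^ 2 : ℝ) : ℂ) * (gOmMat d μ N 0)⁻¹ j k := by
    intro j k
    rw [hinv]
    simp [Matrix.submatrix_apply, Fin.castSucc, Matrix.smul_apply, smul_eq_mul]
  have hI2 : ∀ j : Fin d, (gCHmat d μ N (Fin.snoc (0 : Fin d → ℂ) w))⁻¹ j.castSucc (Fin.last d)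
      = 0 := by
    intro j; rw [hinv]; simp [Matrix.submatrix_apply, Fin.castSucc]
  have hI3 : ∀ k : Fin d, (gCHmat d μ N (Fin.snoc (0 : Fin d → ℂ) w))⁻¹ (Fin.last d) k.castSucc
      = 0 := by
    intro k; rw [hinv]; simp [Matrix.submatrix_apply, Fin.castSucc]
  have hI4 : (gCHmat d μ N (Fin.snoc (0 : Fin d → ℂ) w))⁻¹ (Fin.last d) (Fin.last d)
      = (((1 - ‖w‖ ^ 2)^2 : ℝ) : ℂ) := by
    rw [hinv]; simp [Matrix.submatrix_apply]
  -- Ricci entries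
  have hR1 : ∀ j k : Fin d, RicCH d μ N j.castSucc k.castSucc (Fin.snoc (0 : Fin d → ℂ) w)
      = (((μ*((d:ℝ)+1) - γ) * μ⁻¹ - ((d:ℝ)+2) * (1 - ‖w‖ ^ 2)⁻¹ : ℝ) : ℂ)
        * gOmMat d μ N 0 j k := by
    intro j k
    rw [RicCH_cs_cs hΩopen hNsm hNpos hμ hMA hp₀ j k (by rw [proj_snoc w]; exact hB0 k),
      proj_snoc w, Cw_zero hΩopen hNsm hNpos h0 hN0 hA0 hB0 hw j k,
      Xr_zero hΩopen hNsm hNpos h0 hN0 hA0 hB0 hw, Fr_snoc hN0 w]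
    rw [show gOmMat d μ N 0 j k = gOm d μ N j k 0 from rfl]
    push_cast
    ring
  have hR2 : ∀ j : Fin d, RicCH d μ N j.castSucc (Fin.last d) (Fin.snoc (0 : Fin d → ℂ) w)
      = 0 := fun j => RicCH_cs_last hΩopen hNsm hNpos hμ hMA hp₀ j
        (by rw [proj_snoc w]; exact hA0 j)
  have hR3 : ∀ k : Fin d, RicCH d μ N (Fin.last d) k.castSucc (Fin.snoc (0 : Fin d → ℂ) w)
      = 0 := fun k => RicCH_last_cs hΩopen hNsm hNpos hμ hMA hp₀ k
        (by rw [proj_snoc w]; exact hB0 k)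
  have hR4 : RicCH d μ N (Fin.last d) (Fin.last d) (Fin.snoc (0 : Fin d → ℂ) w)
      = ((-(((d:ℝ)+2) * ((1 - ‖w‖ ^ 2)^2)⁻¹) : ℝ) : ℂ) := by
    rw [RicCH_last_last hΩopen hNsm hNpos hμ hMA hp₀, proj_snoc w,
      Xr_zero hΩopen hNsm hNpos h0 hN0 hA0 hB0 hw, Fr_snoc hN0 w]
    push_cast
    ring
  -- hermitian facts
  have hGc : ∀ i j, (starRingEnd ℂ) (gOmMat d μ N 0 i j) = gOmMat d μ N 0 j i := by
    intro i j
    have h := congrFun (congrFun hPD.1 j) i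
    rw [Matrix.conjTranspose_apply] at h
    rw [starRingEnd_apply]
    exact h
  have hGic : ∀ i j, (starRingEnd ℂ) ((gOmMat d μ N 0)⁻¹ i j) = (gOmMat d μ N 0)⁻¹ j i := by
    intro i j
    have h := congrFun (congrFun hPD.1.inv j) i
    rw [Matrix.conjTranspose_apply] at h
    rw [starRingEnd_apply]
    exact h
  have hGmul : (gOmMat d μ N 0)⁻¹ * gOmMat d μ N 0 = 1 := Matrix.nonsing_inv_mul _ hU
  have hquad := quad_sum (gOmMat d μ N 0) (gOmMat d μ N 0)⁻¹ hGmul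
  simp only [RicNorm2]
  simp only [Fin.sum_univ_castSucc]
  simp only [hI1, hI2, hI3, hI4, hR1, hR2, hR3, hR4]
  simp only [map_zero, mul_zero, zero_mul, _root_.map_mul, Finset.sum_const_zero, add_zero, zero_add,
    Complex.conj_ofReal, hGc, hGic]
  have key : ∀ (G Gi : Matrix (Fin d) (Fin d) ℂ), Gi * G = 1 → ∀ (L lam : ℂ),
      (∑ a : Fin d, ∑ b : Fin d, ∑ e : Fin d, ∑ f : Fin d,
        L * Gi f e * (L * Gi a b) * (lam * G e a) * (lam * G b f))
      = L^2 * lam^2 * d := by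
    intro G Gi h L lam
    have h2 := quad_sum G Gi h
    calc (∑ a : Fin d, ∑ b : Fin d, ∑ e : Fin d, ∑ f : Fin d,
          L * Gi f e * (L * Gi a b) * (lam * G e a) * (lam * G b f))
        = ∑ a : Fin d, ∑ b : Fin d, ∑ e : Fin d, ∑ f : Fin d,
            (L^2*lam^2) * (Gi f e * Gi a b * G e a * G b f) := by
          refine Finset.sum_congr rfl fun a _ => Finset.sum_congr rfl fun b _ =>
            Finset.sum_congr rfl fun e _ => Finset.sum_congr rfl fun f _ => by ring
      _ = (L^2*lam^2) * ∑ a : Fin d, ∑ b : Fin d, ∑ e : Fin d, ∑ f : Fin d,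
            Gi f e * Gi a b * G e a * G b f := by
          simp [Finset.mul_sum]
      _ = L^2*lam^2*d := by rw [h2]
  rw [key _ _ hGmul _ _]
  have h1t' : ((1 - ‖w‖ ^ 2 : ℝ) : ℂ) ≠ 0 := Complex.ofReal_ne_zero.mpr h1t.ne'
  have hμ' : (μ : ℂ) ≠ 0 := Complex.ofReal_ne_zero.mpr hμ.ne'
  push_cast at h1t' ⊢
  field_simp
  ring
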